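/- Let (M, d) be a C-quasi-convex metric space, Θ ⊆ M permeable, and (Y, d_Y) a metric space. If f : M → Y is continuous and its restriction to M \ Θ is L-Lipschitz with respect to the intrinsic metric on M \ Θ, then f is CL-Lipschitz on M with respect to d. -/

import Mathlib

open Set MeasureTheory ENNReal

section Defs

variable {M : Type*} [MetricSpace M]

/-- `γ` is a path in `E` from `x` to `y` parametrized on `[a,b]`. -/
def IsPathIn (E : Set M) (γ : ℝ → M) (a b : ℝ) (x y : M) : Prop :=
  a ≤ b ∧ ContinuousOn γ (Set.Icc a b) ∧ γ a = x ∧ γ b = y ∧ ∀ t ∈ Set.Icc a b, γ t ∈ E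

/-- Length of a path: total variation over `[a,b]`. -/
noncomputable def pathLength (γ : ℝ → M) (a b : ℝ) : ℝ≥0∞ := eVariationOn γ (Set.Icc a b)

/-- Intrinsic metric on `E`: infimum of lengths of finite-length paths in `E`. -/
noncomputable def intrinsicDist (E : Set M) (x y : M) : ℝ≥0∞ :=
  sInf { L | ∃ γ a b, IsPathIn E γ a b x y ∧ pathLength γ a b < ⊤ ∧ pathLength γ a b = L }

/-- `Θ`-intrinsic metric relative to ambient set `N`: only paths whose intersection with `Θ`
has countable closure (closure taken in the subspace `N`) are allowed. -/
noncomputable def thetaDistIn (N Θ : Set M) (x y : M) : ℝ≥0∞ :=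
  sInf { L | ∃ γ a b, IsPathIn N γ a b x y ∧ pathLength γ a b < ⊤ ∧
    (closure (γ '' Set.Icc a b ∩ Θ) ∩ N).Countable ∧ pathLength γ a b = L }

/-- `Θ`-finite intrinsic metric relative to ambient set `N`: only paths meeting `Θ` in finitely
many points are allowed. -/
noncomputable def thetaFinDistIn (N Θ : Set M) (x y : M) : ℝ≥0∞ :=
  sInf { L | ∃ γ a b, IsPathIn N γ a b x y ∧ pathLength γ a b < ⊤ ∧
    (γ '' Set.Icc a b ∩ Θ).Finite ∧ pathLength γ a b = L }

/-- `Θ` is permeable relative to `N`. -/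
def PermeableIn (N Θ : Set M) : Prop :=
  ∀ x ∈ N, ∀ y ∈ N, thetaDistIn N Θ x y = intrinsicDist N x y

/-- `Θ` is finitely permeable relative to `N`. -/
def FinitelyPermeableIn (N Θ : Set M) : Prop :=
  ∀ x ∈ N, ∀ y ∈ N, thetaFinDistIn N Θ x y = intrinsicDist N x y

/-- `Θ` is permeable (relative to the whole space). -/
def Permeable (Θ : Set M) : Prop := PermeableIn Set.univ Θ

/-- `Θ` is finitely permeable (relative to the whole space). -/
def FinitelyPermeable (Θ : Set M) : Prop := FinitelyPermeableIn Set.univ Θ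

end Defs

/-! Along an admissible path `γ : [a,b] → M` put `r t = d(f(γ a), f(γ t))` and let `φ t` be `L` times
the length of `γ` on `[a,t]`. Off the closed set `T = γ⁻¹(closure (γ[a,b] ∩ Θ))` the hypothesis on
`f` gives `|r w - r s| ≤ φ w - φ s` whenever `[s,w]` avoids `T`. By the intermediate value theorem
every value in `(r a, r b)` outside the countable set `r(T)` is taken on some component interval
of `(a,b) \ T`; the `r`-image of a component has measure at most the increment of `φ` over it,
and these increments add up to at most `φ b - φ a`. Hence `d(f(γ a), f(γ b)) ≤ L·ℓ(γ)`.
Permeability lets us take the infimum over such paths, and quasi-convexity bounds it by `C·d(x,y)`.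
-/

def componentIoos (U : Set ℝ) : Set (ℝ × ℝ) :=
  {p | p.1 < p.2 ∧ Ioo p.1 p.2 ⊆ U ∧ p.1 ∉ U ∧ p.2 ∉ U}

theorem pairwiseDisjoint_componentIoos (U : Set ℝ) :
    (componentIoos U).PairwiseDisjoint fun p => Ioo p.1 p.2 := by
  intro p hp q hq hpq
  refine Set.disjoint_left.2 fun x hxp hxq => hpq ?_
  have nested : ∀ {p q : ℝ × ℝ}, p ∈ componentIoos U → q ∈ componentIoos U →
      x ∈ Ioo p.1 p.2 → x ∈ Ioo q.1 q.2 → p.1 ≤ q.1 ∧ q.2 ≤ p.2 := by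
    rintro p q ⟨-, -, hp₁, hp₂⟩ ⟨-, hqU, -, -⟩ hxp hxq
    constructor
    · by_contra! h
      exact hp₁ (hqU ⟨h, hxp.1.trans hxq.2⟩)
    · by_contra! h
      exact hp₂ (hqU ⟨hxq.1.trans hxp.2, h⟩)
  exact Prod.ext (le_antisymm (nested hp hq hxp hxq).1 (nested hq hp hxq hxp).1)
    (le_antisymm (nested hq hp hxq hxp).2 (nested hp hq hxp hxq).2)

theorem countable_componentIoos (U : Set ℝ) : (componentIoos U).Countable :=
  (pairwiseDisjoint_componentIoos U).countable_of_isOpen (fun _ _ => isOpen_Ioo)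
    fun _ hp => nonempty_Ioo.2 hp.1

theorem Icc_subset_of_mem_componentIoos {U : Set ℝ} {a b : ℝ} (hUab : U ⊆ Ioo a b) {p : ℝ × ℝ}
    (hp : p ∈ componentIoos U) : Icc p.1 p.2 ⊆ Icc a b :=
  Icc_subset_Icc_iff hp.1.le |>.2 <| (Ioo_subset_Ioo_iff hp.1).1 (hp.2.1.trans hUab)

theorem IsOpen.subset_biUnion_componentIoos {U : Set ℝ} (hU : IsOpen U) {a b : ℝ} (hUab : U ⊆ Ioo a b) :
    U ⊆ ⋃ p ∈ componentIoos U, Ioo p.1 p.2 := by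
  intro t ht
  have hbelow : BddAbove (Uᶜ ∩ Iic t) := ⟨t, fun _ h => h.2⟩
  have habove : BddBelow (Uᶜ ∩ Ici t) := ⟨t, fun _ h => h.2⟩
  have hu : sSup (Uᶜ ∩ Iic t) ∈ Uᶜ ∩ Iic t :=
    (hU.isClosed_compl.inter isClosed_Iic).csSup_mem
      ⟨a, fun h => (hUab h).1.false, (hUab ht).1.le⟩ hbelow
  have hv : sInf (Uᶜ ∩ Ici t) ∈ Uᶜ ∩ Ici t :=
    (hU.isClosed_compl.inter isClosed_Ici).csInf_mem
      ⟨b, fun h => (hUab h).2.false, (hUab ht).2.le⟩ habove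
  have hut : sSup (Uᶜ ∩ Iic t) < t := hu.2.lt_of_ne fun h => hu.1 (by rwa [h])
  have htv : t < sInf (Uᶜ ∩ Ici t) := hv.2.lt_of_ne' fun h => hv.1 (by rwa [h])
  refine mem_biUnion (x := (_, _)) ⟨hut.trans htv, fun x hx => ?_, hu.1, hv.1⟩ ⟨hut, htv⟩
  by_contra hxU
  rcases le_total x t with hxt | htx
  · exact (le_csSup hbelow ⟨hxU, hxt⟩).not_gt hx.1
  · exact (csInf_le habove ⟨hxU, htx⟩).not_gt hx.2

theorem volume_image_Ioo_le {r φ : ℝ → ℝ} {u v : ℝ} (hφ : MonotoneOn φ (Icc u v))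
    (hr : ∀ s ∈ Ioo u v, ∀ w ∈ Ioo u v, s ≤ w → |r w - r s| ≤ φ w - φ s) :
    volume (r '' Ioo u v) ≤ ENNReal.ofReal (φ v - φ u) := by
  refine (Real.volume_le_diam _).trans (Metric.ediam_le ?_)
  rintro _ ⟨s, hs, rfl⟩ _ ⟨w, hw, rfl⟩
  wlog hsw : s ≤ w generalizing s w
  · rw [edist_comm]
    exact this w hw s hs (le_of_not_ge hsw)
  have huv : u ≤ v := hs.1.le.trans hs.2.le
  have hφw : φ w ≤ φ v := hφ (Ioo_subset_Icc_self hw) (right_mem_Icc.2 huv) hw.2.le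
  have hφs : φ u ≤ φ s := hφ (left_mem_Icc.2 huv) (Ioo_subset_Icc_self hs) hs.1.le
  rw [edist_dist, Real.dist_eq, abs_sub_comm]
  exact ENNReal.ofReal_le_ofReal ((hr s hs w hw hsw).trans (by linarith))

theorem MonotoneOn.disjoint_Ioo_image {φ : ℝ → ℝ} {s : Set ℝ} (hφ : MonotoneOn φ s)
    {p₁ p₂ q₁ q₂ : ℝ} (hp₁ : p₁ ∈ s) (hp₂ : p₂ ∈ s) (hq₁ : q₁ ∈ s) (hq₂ : q₂ ∈ s)
    (h : Disjoint (Ioo p₁ p₂) (Ioo q₁ q₂)) : Disjoint (Ioo (φ p₁) (φ p₂)) (Ioo (φ q₁) (φ q₂)) := by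
  rw [Ioo_disjoint_Ioo] at h ⊢
  rw [← hφ.map_min hp₂ hq₂, ← hφ.map_max hp₁ hq₁]
  exact hφ (by rcases min_choice p₂ q₂ with h | h <;> rw [h] <;> assumption)
    (by rcases max_choice p₁ q₁ with h | h <;> rw [h] <;> assumption) h

theorem tsum_ofReal_sub_componentIoos_le {U : Set ℝ} {a b : ℝ} {φ : ℝ → ℝ} (hUab : U ⊆ Ioo a b)
    (hφ : MonotoneOn φ (Icc a b)) :
    ∑' p : componentIoos U, ENNReal.ofReal (φ p.1.2 - φ p.1.1) ≤ ENNReal.ofReal (φ b - φ a) := by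
  have hends : ∀ p ∈ componentIoos U, p.1 ∈ Icc a b ∧ p.2 ∈ Icc a b := fun p hp =>
    ⟨Icc_subset_of_mem_componentIoos hUab hp (left_mem_Icc.2 hp.1.le),
      Icc_subset_of_mem_componentIoos hUab hp (right_mem_Icc.2 hp.1.le)⟩
  have hdisj : (componentIoos U).PairwiseDisjoint fun p => Ioo (φ p.1) (φ p.2) :=
    fun p hp q hq hpq => hφ.disjoint_Ioo_image (hends p hp).1 (hends p hp).2 (hends q hq).1
      (hends q hq).2 (pairwiseDisjoint_componentIoos U hp hq hpq)
  calc ∑' p : componentIoos U, ENNReal.ofReal (φ p.1.2 - φ p.1.1)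
      = ∑' p : componentIoos U, volume (Ioo (φ p.1.1) (φ p.1.2)) := by simp only [Real.volume_Ioo]
    _ = volume (⋃ p ∈ componentIoos U, Ioo (φ p.1) (φ p.2)) :=
      (measure_biUnion (countable_componentIoos U) hdisj fun _ _ => measurableSet_Ioo).symm
    _ ≤ volume (Icc (φ a) (φ b)) := measure_mono <| iUnion₂_subset fun p hp => by
      obtain ⟨hp₁, hp₂⟩ := hends p hp
      have hab : a ≤ b := hp₁.1.trans hp₁.2
      exact Ioo_subset_Icc_self.trans <| Icc_subset_Icc
        (hφ (left_mem_Icc.2 hab) hp₁ hp₁.1) (hφ hp₂ (right_mem_Icc.2 hab) hp₂.2)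
    _ = ENNReal.ofReal (φ b - φ a) := Real.volume_Icc

theorem sub_le_sub_of_abs_sub_le_off_closed {r φ : ℝ → ℝ} {a b : ℝ} {T : Set ℝ} (hab : a ≤ b)
    (hr : ContinuousOn r (Icc a b)) (hφ : MonotoneOn φ (Icc a b)) (hT : IsClosed T)
    (hrT : (r '' T).Countable)
    (hloc : ∀ s w, s ≤ w → Icc s w ⊆ Ioo a b \ T → |r w - r s| ≤ φ w - φ s) :
    r b - r a ≤ φ b - φ a := by
  set U := Ioo a b \ T
  have hcover : Ioo (r a) (r b) \ r '' T ⊆ ⋃ p ∈ componentIoos U, r '' Ioo p.1 p.2 := by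
    rintro c ⟨hc, hcT⟩
    obtain ⟨t, ht, rfl⟩ := intermediate_value_Ioo hab hr hc
    have htU : t ∈ U := ⟨ht, fun h => hcT (mem_image_of_mem r h)⟩
    obtain ⟨p, hp, htp⟩ := mem_iUnion₂.1 ((isOpen_Ioo.sdiff hT).subset_biUnion_componentIoos
      sdiff_subset htU)
    exact mem_biUnion hp (mem_image_of_mem r htp)
  have hcomp : ∀ p : componentIoos U,
      volume (r '' Ioo p.1.1 p.1.2) ≤ ENNReal.ofReal (φ p.1.2 - φ p.1.1) := fun p =>
    volume_image_Ioo_le (hφ.mono (Icc_subset_of_mem_componentIoos sdiff_subset p.2))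
      fun s hs w hw hsw => hloc s w hsw ((Icc_subset_Ioo hs.1 hw.2).trans p.2.2.1)
  have hvol : ENNReal.ofReal (r b - r a) ≤ ENNReal.ofReal (φ b - φ a) :=
    calc ENNReal.ofReal (r b - r a) = volume (Ioo (r a) (r b) \ r '' T) := by
          rw [measure_sdiff_null (hrT.measure_zero _), Real.volume_Ioo]
      _ ≤ volume (⋃ p ∈ componentIoos U, r '' Ioo p.1 p.2) := measure_mono hcover
      _ ≤ ∑' p : componentIoos U, volume (r '' Ioo p.1.1 p.1.2) :=
          measure_biUnion_le _ (countable_componentIoos U) _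
      _ ≤ ∑' p : componentIoos U, ENNReal.ofReal (φ p.1.2 - φ p.1.1) := ENNReal.tsum_le_tsum hcomp
      _ ≤ ENNReal.ofReal (φ b - φ a) := tsum_ofReal_sub_componentIoos_le sdiff_subset hφ
  exact (ENNReal.ofReal_le_ofReal_iff
    (sub_nonneg.2 (hφ (left_mem_Icc.2 hab) (right_mem_Icc.2 hab) hab))).1 hvol

theorem ENNReal.le_mul_sInf {s : Set ℝ≥0∞} {a c : ℝ≥0∞} (ha : a ≠ ⊤) (hs : sInf s ≠ ⊤)
    (h : ∀ ℓ ∈ s, c ≤ a * ℓ) : c ≤ a * sInf s := by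
  have hne : s.Nonempty := nonempty_iff_ne_empty.2 fun h => hs (by rw [h, sInf_empty])
  rw [sInf_eq_iInf', ENNReal.mul_iInf' (by simp [ha]) fun _ => hne.to_subtype]
  exact le_iInf fun ℓ => h ℓ ℓ.2

section PathLength

variable {M Y : Type*} [MetricSpace M] [MetricSpace Y]

theorem intrinsicDist_le_pathLength {E : Set M} {γ : ℝ → M} {a b : ℝ} {x y : M}
    (hγ : IsPathIn E γ a b x y) (hfin : pathLength γ a b < ⊤) :
    intrinsicDist E x y ≤ pathLength γ a b :=
  sInf_le ⟨γ, a, b, hγ, hfin, rfl⟩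

theorem edist_le_mul_pathLength_of_isPathIn_compl {Θ : Set M} {f : M → Y} {L : NNReal}
    (hLip : ∀ x ∈ Θᶜ, ∀ y ∈ Θᶜ, intrinsicDist Θᶜ x y < ⊤ →
      edist (f x) (f y) ≤ L * intrinsicDist Θᶜ x y)
    {γ : ℝ → M} {a b : ℝ} {x y : M} (hγ : IsPathIn Θᶜ γ a b x y) (hfin : pathLength γ a b < ⊤) :
    edist (f x) (f y) ≤ L * pathLength γ a b := by
  have hx : x ∈ Θᶜ := hγ.2.2.1 ▸ hγ.2.2.2.2 a (left_mem_Icc.2 hγ.1)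
  have hy : y ∈ Θᶜ := hγ.2.2.2.1 ▸ hγ.2.2.2.2 b (right_mem_Icc.2 hγ.1)
  have hle := intrinsicDist_le_pathLength hγ hfin
  exact (hLip x hx y hy (hle.trans_lt hfin)).trans (mul_le_mul_right hle _)

theorem variationOnFromTo_sub_eq_pathLength {γ : ℝ → M} {a b s w : ℝ}
    (hfin : pathLength γ a b < ⊤) (hs : s ∈ Icc a b) (hw : w ∈ Icc a b) (hsw : s ≤ w) :
    variationOnFromTo γ (Icc a b) a w - variationOnFromTo γ (Icc a b) a s =
      (pathLength γ s w).toReal := by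
  rw [variationOnFromTo.sub_right (BoundedVariationOn.locallyBoundedVariationOn hfin.ne)
      (left_mem_Icc.2 (hs.1.trans hs.2)) hw hs, variationOnFromTo.eq_of_le _ _ hsw,
    inter_eq_right.2 (Icc_subset_Icc hs.1 hw.2)]
  rfl

theorem edist_le_mul_pathLength_of_countable_closure {Θ : Set M} {f : M → Y} (hf : Continuous f)
    {L : NNReal} (hLip : ∀ x ∈ Θᶜ, ∀ y ∈ Θᶜ, intrinsicDist Θᶜ x y < ⊤ →
      edist (f x) (f y) ≤ L * intrinsicDist Θᶜ x y)
    {γ : ℝ → M} {a b : ℝ} (hab : a ≤ b) (hγ : ContinuousOn γ (Icc a b))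
    (hfin : pathLength γ a b < ⊤) (hK : (closure (γ '' Icc a b ∩ Θ)).Countable) :
    edist (f (γ a)) (f (γ b)) ≤ L * pathLength γ a b := by
  set K := closure (γ '' Icc a b ∩ Θ)
  set r : ℝ → ℝ := fun t => dist (f (γ a)) (f (γ t))
  set φ : ℝ → ℝ := fun t => L * variationOnFromTo γ (Icc a b) a t
  have hφ : MonotoneOn φ (Icc a b) := fun s hs w hw hsw => mul_le_mul_of_nonneg_left
    (variationOnFromTo.monotoneOn (BoundedVariationOn.locallyBoundedVariationOn hfin.ne)
      (left_mem_Icc.2 hab) hs hw hsw) L.coe_nonneg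
  have hφ_sub : ∀ s ∈ Icc a b, ∀ w ∈ Icc a b, s ≤ w →
      φ w - φ s = L * (pathLength γ s w).toReal := fun s hs w hw hsw => by
    rw [← mul_sub, variationOnFromTo_sub_eq_pathLength hfin hs hw hsw]
  have hloc : ∀ s w, s ≤ w → Icc s w ⊆ Ioo a b \ (Icc a b ∩ γ ⁻¹' K) →
      |r w - r s| ≤ φ w - φ s := by
    intro s w hsw hsub
    have hs : s ∈ Icc a b := Ioo_subset_Icc_self (hsub (left_mem_Icc.2 hsw)).1
    have hw : w ∈ Icc a b := Ioo_subset_Icc_self (hsub (right_mem_Icc.2 hsw)).1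
    have hpath : IsPathIn Θᶜ γ s w (γ s) (γ w) := by
      refine ⟨hsw, hγ.mono (Icc_subset_Icc hs.1 hw.2), rfl, rfl, fun t ht hΘ => ?_⟩
      have ht' := hsub ht
      exact ht'.2 ⟨Ioo_subset_Icc_self ht'.1,
        subset_closure ⟨mem_image_of_mem γ (Ioo_subset_Icc_self ht'.1), hΘ⟩⟩
    have hlen : pathLength γ s w < ⊤ :=
      (eVariationOn.mono γ (Icc_subset_Icc hs.1 hw.2)).trans_lt hfin
    calc |r w - r s| ≤ dist (f (γ s)) (f (γ w)) := by
          rw [← Real.dist_eq (r w), dist_comm (f (γ s))]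
          exact dist_dist_dist_le_right (f (γ a)) _ _
      _ ≤ φ w - φ s := by
          rw [hφ_sub s hs w hw hsw, dist_edist]
          simpa using ENNReal.toReal_mono (ENNReal.mul_ne_top ENNReal.coe_ne_top hlen.ne)
            (edist_le_mul_pathLength_of_isPathIn_compl hLip hpath hlen)
  have hrK : (r '' (Icc a b ∩ γ ⁻¹' K)).Countable :=
    (hK.image fun z => dist (f (γ a)) (f z)).mono <| by
      rintro _ ⟨t, ⟨-, ht⟩, rfl⟩
      exact mem_image_of_mem _ ht
  have key := sub_le_sub_of_abs_sub_le_off_closed hab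
    (continuous_const.dist hf |>.comp_continuousOn hγ) hφ
    (hγ.preimage_isClosed_of_isClosed isClosed_Icc isClosed_closure) hrK hloc
  rw [hφ_sub a (left_mem_Icc.2 hab) b (right_mem_Icc.2 hab) hab] at key
  calc edist (f (γ a)) (f (γ b)) = ENNReal.ofReal (r b - r a) := by simp [r, edist_dist]
    _ ≤ ENNReal.ofReal (L * (pathLength γ a b).toReal) := ENNReal.ofReal_le_ofReal key
    _ = L * pathLength γ a b := by
      rw [ENNReal.ofReal_mul L.coe_nonneg, ENNReal.ofReal_coe_nnreal, ENNReal.ofReal_toReal hfin.ne]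

theorem edist_le_mul_thetaDistIn_univ {Θ : Set M} {f : M → Y} (hf : Continuous f) {L : NNReal}
    (hLip : ∀ x ∈ Θᶜ, ∀ y ∈ Θᶜ, intrinsicDist Θᶜ x y < ⊤ →
      edist (f x) (f y) ≤ L * intrinsicDist Θᶜ x y)
    {x y : M} (hθ : thetaDistIn univ Θ x y ≠ ⊤) :
    edist (f x) (f y) ≤ L * thetaDistIn univ Θ x y := by
  refine ENNReal.le_mul_sInf coe_ne_top hθ ?_
  rintro _ ⟨γ, a, b, ⟨hab, hγ, rfl, rfl, -⟩, hfin, hK, rfl⟩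
  exact edist_le_mul_pathLength_of_countable_closure hf hLip hab hγ hfin
    (by rwa [inter_univ] at hK)

end PathLength

/-- Corollary: on a `C`-quasi-convex space, a continuous function which is intrinsically
`L`-Lipschitz outside a permeable set is `C·L`-Lipschitz on the whole space. -/
theorem stmt8 {M Y : Type*} [MetricSpace M] [MetricSpace Y] (C : NNReal)
    (hqc : ∀ x y : M, intrinsicDist Set.univ x y ≤ C * edist x y)
    (Θ : Set M) (hΘ : Permeable Θ) (f : M → Y) (hf : Continuous f) (L : NNReal)
    (hLip : ∀ x ∈ Θᶜ, ∀ y ∈ Θᶜ, intrinsicDist Θᶜ x y < ⊤ →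
      edist (f x) (f y) ≤ L * intrinsicDist Θᶜ x y) :
    LipschitzWith (C * L) f := by
  intro x y
  have hθ : thetaDistIn univ Θ x y = intrinsicDist univ x y := hΘ x trivial y trivial
  have hfin : thetaDistIn univ Θ x y ≠ ⊤ := by
    rw [hθ]
    exact ((hqc x y).trans_lt (mul_lt_top coe_lt_top (edist_lt_top x y))).ne
  calc edist (f x) (f y) ≤ L * thetaDistIn univ Θ x y := edist_le_mul_thetaDistIn_univ hf hLip hfin
    _ ≤ L * (C * edist x y) := by rw [hθ]; gcongr; exact hqc x y
    _ = ↑(C * L) * edist x y := by push_cast; ring
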